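/- arXiv:1610.09651 — 5 statements merged into one kernel-verified Lean document; each statement's English description precedes it below -/
import Mathlib

section
/- Let T : ℝⁿ → ℝⁿ be a perfect-information finite Shapley operator and assume the game is ergodic, i.e., for every g ∈ ℝⁿ there exist λ ∈ ℝ and u ∈ ℝⁿ with g + T(u) = λe + u. Then there exists a finite family H₁,…,H_N of affine hyperplanes of ℝⁿ such that for every g ∈ ℝⁿ outside H₁ ∪ … ∪ H_N, the operator g + T has a unique bias vector up to an additive constant: whenever g + T(u) = λe + u and g + T(v) = μe + v, one has v = u + ce for some c ∈ ℝ. In particular, the set of g for which the bias vector of g + T is not unique up to an additive constant is contained in a finite union of affine hyperplanes (hence has Lebesgue measure zero). -/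
/-!
If `u` and `v` are bias vectors of `g + T`, their eigenvalues agree. Let `I` be the set where
`v - u` is maximal, and `π` the policy pairing an optimal action of the minimiser for `u` with a
best reply of the maximiser for `v`. Then `π` keeps the play inside `I`, and on `I` the vector `u`
solves the Poisson equation `u = g + r_π - λ + P_π u`; integrating it against a stationary
distribution `m` of `P_π` supported on `I` gives `λ = ⟨m, g + r_π⟩`. The same argument on the set
`J` where `u - v` is maximal gives `λ = ⟨m', g + r_π'⟩`. If `v - u` is not constant, `I` and `J`
are disjoint, so `m ≠ m'` and `g` lies on the hyperplane `⟨m - m', g⟩ = ⟨m', r_π'⟩ - ⟨m, r_π⟩`.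
Only finitely many policies and sets occur, hence only finitely many hyperplanes.
-/

/-- A perfect-information finite Shapley operator:
`T_i(x) = min_{a ∈ A i} max_{b ∈ B i a} ( r i a b + ⟨P i a b, x⟩ )`. -/
noncomputable def shapleyOp {n : ℕ} (A : Fin n → Type) [∀ i, Fintype (A i)] [∀ i, Nonempty (A i)]
    (B : ∀ i, A i → Type) [∀ i a, Fintype (B i a)] [∀ i a, Nonempty (B i a)]
    (r : ∀ i, ∀ a : A i, B i a → ℝ) (P : ∀ i, ∀ a : A i, B i a → Fin n → ℝ) :
    (Fin n → ℝ) → (Fin n → ℝ) :=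
  fun x i => ⨅ a : A i, ⨆ b : B i a, (r i a b + ∑ j, P i a b j * x j)

open Filter Topology Finset Matrix

theorem ContinuousLinearMap.exists_mem_fixed_of_mapsTo {E : Type*} [NormedAddCommGroup E]
    [NormedSpace ℝ E] (f : E →L[ℝ] E) {K : Set E} (hK : IsCompact K) (hKc : Convex ℝ K)
    (hne : K.Nonempty) (hf : Set.MapsTo f K K) : ∃ x ∈ K, f x = x := by
  obtain ⟨x₀, hx₀⟩ := hne
  obtain ⟨C, hC⟩ := hK.isBounded.exists_norm_le
  have orbit_mem (t : ℕ) : f^[t] x₀ ∈ K := hf.iterate t hx₀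
  set avg : ℕ → E := fun k => ((k : ℝ) + 1)⁻¹ • ∑ t ∈ range (k + 1), f^[t] x₀
  have avg_mem (k : ℕ) : avg k ∈ K := by
    rw [show avg k = ∑ t ∈ range (k + 1), ((k : ℝ) + 1)⁻¹ • f^[t] x₀ from smul_sum ..]
    refine hKc.sum_mem (fun _ _ => by positivity) ?_ fun t _ => orbit_mem t
    simp [field]
  have avg_defect (k : ℕ) : f (avg k) - avg k = ((k : ℝ) + 1)⁻¹ • (f^[k + 1] x₀ - x₀) := by
    simp only [avg, map_smul, map_sum, ← smul_sub, ← sum_sub_distrib,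
      ← Function.iterate_succ_apply' f]
    rw [sum_range_sub (fun t => f^[t] x₀), Function.iterate_zero_apply]
  have defect_tendsto : Tendsto (fun k => f (avg k) - avg k) atTop (𝓝 0) := by
    simp only [avg_defect]
    refine Tendsto.zero_smul_isBoundedUnder_le ?_ (isBoundedUnder_of ⟨C + C, fun k => ?_⟩)
    · simpa [one_div] using tendsto_one_div_add_atTop_nhds_zero_nat (𝕜 := ℝ)
    · exact (norm_sub_le _ _).trans (add_le_add (hC _ (orbit_mem _)) (hC _ hx₀))
  obtain ⟨x, hxK, φ, hφ, hlim⟩ := hK.tendsto_subseq avg_mem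
  refine ⟨x, hxK, sub_eq_zero.mp (tendsto_nhds_unique ?_ (defect_tendsto.comp hφ.tendsto_atTop))⟩
  exact ((f.continuous.tendsto x).comp hlim).sub hlim

section StochasticVector

variable {ι : Type*} [Fintype ι] {p : ι → ℝ}

theorem dotProduct_le_add_of_le_add (hp : p ∈ stdSimplex ℝ ι) {u v : ι → ℝ} {c : ℝ}
    (h : ∀ j, v j ≤ u j + c) : p ⬝ᵥ v ≤ p ⬝ᵥ u + c :=
  calc p ⬝ᵥ v ≤ ∑ j, p j * (u j + c) :=
        sum_le_sum fun j _ => mul_le_mul_of_nonneg_left (h j) (hp.1 j)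
    _ = p ⬝ᵥ u + c := by simp only [mul_add, sum_add_distrib, ← sum_mul, hp.2, one_mul, dotProduct]

theorem eq_of_le_dotProduct (hp : p ∈ stdSimplex ℝ ι) {w : ι → ℝ} {c : ℝ} (hw : ∀ j, w j ≤ c)
    (hc : c ≤ p ⬝ᵥ w) {j : ι} (hj : p j ≠ 0) : w j = c := by
  have hsum : ∑ k, p k * (c - w k) = 0 := by
    refine le_antisymm ?_ (sum_nonneg fun k _ => mul_nonneg (hp.1 k) (sub_nonneg.mpr (hw k)))
    simp only [mul_sub, sum_sub_distrib, ← sum_mul, hp.2, one_mul]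
    exact sub_nonpos.mpr hc
  have := (sum_eq_zero_iff_of_nonneg fun k _ =>
    mul_nonneg (hp.1 k) (sub_nonneg.mpr (hw k))).mp hsum j (mem_univ j)
  linarith [(mul_eq_zero.mp this).resolve_left hj]

end StochasticVector

section Stationary

variable {ι : Type*} [Fintype ι]

def IsStationaryOn (M : Matrix ι ι ℝ) (I : Set ι) (m : ι → ℝ) : Prop :=
  m ∈ stdSimplex ℝ ι ∧ (∀ j ∉ I, m j = 0) ∧ m ᵥ* M = m

theorem exists_isStationaryOn [DecidableEq ι] {M : Matrix ι ι ℝ} (hM : M ∈ rowStochastic ℝ ι)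
    {I : Set ι} (hI : I.Nonempty) (hclosed : ∀ i ∈ I, ∀ j, M i j ≠ 0 → j ∈ I) :
    ∃ m, IsStationaryOn M I m := by
  set K := stdSimplex ℝ ι ∩ (Iᶜ).pi fun _ => {0}
  have hK : IsCompact K :=
    (isCompact_stdSimplex ℝ ι).inter_right (isClosed_set_pi fun _ _ => isClosed_singleton)
  have hKc : Convex ℝ K := (convex_stdSimplex ℝ ι).inter (convex_pi fun _ _ => convex_singleton 0)
  obtain ⟨i₀, hi₀⟩ := hI
  have hKne : K.Nonempty := by
    refine ⟨Pi.single i₀ 1, ⟨single_mem_stdSimplex ℝ i₀, fun j hj => ?_⟩⟩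
    exact Pi.single_eq_of_ne (by rintro rfl; exact hj hi₀) _
  have hmaps : Set.MapsTo (M.vecMulLinear.toContinuousLinearMap) K K := by
    rintro m ⟨⟨hm0, hm1⟩, hmI⟩
    refine ⟨⟨nonneg_vecMul_of_mem_rowStochastic hM hm0, ?_⟩, fun j hj => ?_⟩
    · simpa [dotProduct_one] using
        vecMul_dotProduct_one_eq_one_rowStochastic hM (by rwa [dotProduct_one])
    · refine sum_eq_zero fun i _ => ?_
      by_cases hi : i ∈ I
      · exact mul_eq_zero_of_right _ (not_imp_comm.mp (hclosed i hi j) hj)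
      · exact mul_eq_zero_of_left (hmI i hi) _
  obtain ⟨m, ⟨hmS, hmI⟩, hfix⟩ :=
    M.vecMulLinear.toContinuousLinearMap.exists_mem_fixed_of_mapsTo hK hKc hKne hmaps
  exact ⟨m, hmS, hmI, hfix⟩

noncomputable def stationaryOn (M : Matrix ι ι ℝ) (I : Set ι) : ι → ℝ :=
  Classical.epsilon (IsStationaryOn M I)

theorem isStationaryOn_stationaryOn [DecidableEq ι] {M : Matrix ι ι ℝ}
    (hM : M ∈ rowStochastic ℝ ι) {I : Set ι} (hI : I.Nonempty) (hclosed : ∀ i ∈ I, ∀ j, M i j ≠ 0 → j ∈ I) :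
    IsStationaryOn M I (stationaryOn M I) :=
  Classical.epsilon_spec (exists_isStationaryOn hM hI hclosed)

variable {M : Matrix ι ι ℝ} {I : Set ι} {m : ι → ℝ}

theorem IsStationaryOn.eq_dotProduct (hm : IsStationaryOn M I m) {ρ u : ι → ℝ} {lam : ℝ}
    (hu : ∀ i ∈ I, u i = (ρ + M *ᵥ u) i - lam) : lam = m ⬝ᵥ ρ := by
  obtain ⟨⟨-, hm1⟩, hmI, hfix⟩ := hm
  have : m ⬝ᵥ u = m ⬝ᵥ ρ + m ⬝ᵥ u - lam :=
    calc m ⬝ᵥ u = ∑ i, m i * ((ρ + M *ᵥ u) i - lam) := by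
          refine sum_congr rfl fun i _ => ?_
          by_cases hi : i ∈ I
          · rw [← hu i hi]
          · simp [hmI i hi]
      _ = m ⬝ᵥ ρ + m ⬝ᵥ u - lam := by
          simp only [mul_sub, sum_sub_distrib, ← sum_mul, hm1, one_mul]
          rw [← dotProduct, dotProduct_add, dotProduct_mulVec, hfix]
  linarith

theorem IsStationaryOn.ne_of_disjoint {M' : Matrix ι ι ℝ} {J : Set ι} {m' : ι → ℝ}
    (hm : IsStationaryOn M I m) (hm' : IsStationaryOn M' J m') (hIJ : Disjoint I J) : m ≠ m' := by
  rintro rfl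
  have hzero (j : ι) : m j = 0 := by
    by_cases hj : j ∈ I
    · exact hm'.2.1 j (Set.disjoint_left.mp hIJ hj)
    · exact hm.2.1 j hj
  simpa [hzero] using hm.1.2

end Stationary

section Shapley

variable {n : ℕ} {A : Fin n → Type} {B : ∀ i, A i → Type}
  {r : ∀ i, ∀ a : A i, B i a → ℝ} {P : ∀ i, ∀ a : A i, B i a → Fin n → ℝ}

def policyMatrix (P : ∀ i, ∀ a : A i, B i a → Fin n → ℝ) (π : ∀ i, Σ a : A i, B i a) :
    Matrix (Fin n) (Fin n) ℝ :=
  of fun i => P i (π i).1 (π i).2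

def policyReward (r : ∀ i, ∀ a : A i, B i a → ℝ) (π : ∀ i, Σ a : A i, B i a) : Fin n → ℝ :=
  fun i => r i (π i).1 (π i).2

/-- The affine hyperplane `{g | ⟨m - m', g⟩ = ⟨m', r_π'⟩ - ⟨m, r_π⟩}`, as (normal, offset), where
`m` and `m'` are the chosen stationary distributions of `(π, I) := x` and `(π', J) := y`. -/
noncomputable def biasHyperplane (P : ∀ i, ∀ a : A i, B i a → Fin n → ℝ)
    (r : ∀ i, ∀ a : A i, B i a → ℝ) (x y : (∀ i, Σ a : A i, B i a) × Set (Fin n)) :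
    (Fin n → ℝ) × ℝ :=
  let m := stationaryOn (policyMatrix P x.1) x.2
  let m' := stationaryOn (policyMatrix P y.1) y.2
  (m - m', m' ⬝ᵥ policyReward r y.1 - m ⬝ᵥ policyReward r x.1)

theorem policyMatrix_mem_rowStochastic (hP : ∀ i a b, P i a b ∈ stdSimplex ℝ (Fin n))
    (π : ∀ i, Σ a : A i, B i a) : policyMatrix P π ∈ rowStochastic ℝ (Fin n) :=
  mem_rowStochastic_iff_sum.mpr ⟨fun i => (hP i _ _).1, fun i => (hP i _ _).2⟩

variable [∀ i, Fintype (A i)] [∀ i, Nonempty (A i)] [∀ i a, Fintype (B i a)]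
  [∀ i a, Nonempty (B i a)]

theorem shapleyOp_apply (x : Fin n → ℝ) (i : Fin n) :
    shapleyOp A B r P x i = ⨅ a, ⨆ b, (r i a b + P i a b ⬝ᵥ x) :=
  rfl

theorem shapleyOp_le_add (hP : ∀ i a b, P i a b ∈ stdSimplex ℝ (Fin n)) {u v : Fin n → ℝ}
    {c : ℝ} (h : ∀ j, v j ≤ u j + c) (i : Fin n) :
    shapleyOp A B r P v i ≤ shapleyOp A B r P u i + c := by
  simp only [shapleyOp_apply]
  calc ⨅ a, ⨆ b, (r i a b + P i a b ⬝ᵥ v) ≤ ⨅ a, ⨆ b, (r i a b + P i a b ⬝ᵥ u + c) :=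
        ciInf_mono (Finite.bddBelow_range _) fun a => ciSup_mono (Finite.bddAbove_range _)
          fun b => by linarith [dotProduct_le_add_of_le_add (hP i a b) h]
    _ = (⨅ a, ⨆ b, (r i a b + P i a b ⬝ᵥ u)) + c := by
        simp only [ciSup_add (Finite.bddAbove_range _), ciInf_add (Finite.bddBelow_range _)]

theorem eigenvalue_le [Nonempty (Fin n)] (hP : ∀ i a b, P i a b ∈ stdSimplex ℝ (Fin n))
    {g u v : Fin n → ℝ} {lam mu : ℝ} (hu : g + shapleyOp A B r P u = (fun _ => lam) + u)
    (hv : g + shapleyOp A B r P v = (fun _ => mu) + v) : mu ≤ lam := by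
  obtain ⟨i, hi⟩ := Finite.exists_max fun j => v j - u j
  have hle := shapleyOp_le_add hP (r := r) (u := u) (v := v) (c := v i - u i)
    (fun j => by linarith [hi j]) i
  have hui : g i + shapleyOp A B r P u i = lam + u i := congrFun hu i
  have hvi : g i + shapleyOp A B r P v i = mu + v i := congrFun hv i
  linarith

theorem exists_policy_of_bias (hP : ∀ i a b, P i a b ∈ stdSimplex ℝ (Fin n))
    {g u v : Fin n → ℝ} {lam : ℝ} (hu : g + shapleyOp A B r P u = (fun _ => lam) + u)
    (hv : g + shapleyOp A B r P v = (fun _ => lam) + v) :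
    ∃ π : ∀ i, Σ a : A i, B i a, ∀ i, (∀ j, v j - u j ≤ v i - u i) →
      (∀ j, policyMatrix P π i j ≠ 0 → ∀ k, v k - u k ≤ v j - u j) ∧
      u i = (g + policyReward r π + policyMatrix P π *ᵥ u) i - lam := by
  choose a ha using fun i =>
    exists_eq_ciInf_of_finite (f := fun a => ⨆ b, (r i a b + P i a b ⬝ᵥ u))
  choose b hb using fun i =>
    exists_eq_ciSup_of_finite (f := fun b => r i (a i) b + P i (a i) b ⬝ᵥ v)
  refine ⟨fun i => ⟨a i, b i⟩, fun i hi => ?_⟩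
  set p := P i (a i) (b i)
  have hui : g i + shapleyOp A B r P u i = lam + u i := congrFun hu i
  have hvi : g i + shapleyOp A B r P v i = lam + v i := congrFun hv i
  -- `a i` is optimal for `u` and `b i` is optimal against it for `v`; since `T v i - T u i`
  -- equals the maximum of `v - u`, each inequality below is an equality.
  have hTv : shapleyOp A B r P v i ≤ r i (a i) (b i) + p ⬝ᵥ v :=
    (ciInf_le (Finite.bddBelow_range _) (a i)).trans_eq (hb i).symm
  have hpv : p ⬝ᵥ v ≤ p ⬝ᵥ u + (v i - u i) :=
    dotProduct_le_add_of_le_add (hP i _ _) fun j => by linarith [hi j]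
  have hTu : r i (a i) (b i) + p ⬝ᵥ u ≤ shapleyOp A B r P u i :=
    (le_ciSup (Finite.bddAbove_range _) (b i)).trans_eq (ha i)
  refine ⟨fun j hj k => ?_, ?_⟩
  · have hc : v i - u i ≤ p ⬝ᵥ (v - u) := by rw [dotProduct_sub]; linarith
    rw [eq_of_le_dotProduct (hP i _ _) hi hc hj]
    exact hi k
  · change u i = g i + r i (a i) (b i) + p ⬝ᵥ u - lam
    linarith

theorem exists_policy_isStationaryOn_gain [Nonempty (Fin n)]
    (hP : ∀ i a b, P i a b ∈ stdSimplex ℝ (Fin n)) {g u v : Fin n → ℝ} {lam : ℝ}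
    (hu : g + shapleyOp A B r P u = (fun _ => lam) + u)
    (hv : g + shapleyOp A B r P v = (fun _ => lam) + v) :
    ∃ π : ∀ i, Σ a : A i, B i a,
      IsStationaryOn (policyMatrix P π) {i | ∀ j, v j - u j ≤ v i - u i}
        (stationaryOn (policyMatrix P π) {i | ∀ j, v j - u j ≤ v i - u i}) ∧
      lam = stationaryOn (policyMatrix P π) {i | ∀ j, v j - u j ≤ v i - u i} ⬝ᵥ
        (g + policyReward r π) := by
  obtain ⟨π, hπ⟩ := exists_policy_of_bias hP hu hv
  have hI : {i | ∀ j, v j - u j ≤ v i - u i}.Nonempty := Finite.exists_max fun j => v j - u j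
  have hm := isStationaryOn_stationaryOn (policyMatrix_mem_rowStochastic hP π) hI
    fun i hi => (hπ i hi).1
  exact ⟨π, hm, hm.eq_dotProduct fun i hi => (hπ i hi).2⟩

theorem exists_biasHyperplane_of_ne_add_const (hP : ∀ i a b, P i a b ∈ stdSimplex ℝ (Fin n))
    {g u v : Fin n → ℝ} {lam mu : ℝ} (hu : g + shapleyOp A B r P u = (fun _ => lam) + u)
    (hv : g + shapleyOp A B r P v = (fun _ => mu) + v) (huv : ¬∃ c : ℝ, v = u + fun _ => c) :
    ∃ x y, (biasHyperplane P r x y).1 ≠ 0 ∧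
      (biasHyperplane P r x y).1 ⬝ᵥ g = (biasHyperplane P r x y).2 := by
  rcases isEmpty_or_nonempty (Fin n) with _ | _
  · exact absurd ⟨0, Subsingleton.elim _ _⟩ huv
  obtain rfl : mu = lam := le_antisymm (eigenvalue_le hP hu hv) (eigenvalue_le hP hv hu)
  obtain ⟨π, hπ, hgain⟩ := exists_policy_isStationaryOn_gain hP hu hv
  obtain ⟨π', hπ', hgain'⟩ := exists_policy_isStationaryOn_gain hP hv hu
  set I : Set (Fin n) := {i | ∀ j, v j - u j ≤ v i - u i}
  set J : Set (Fin n) := {i | ∀ j, u j - v j ≤ u i - v i}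
  have hIJ : Disjoint I J := Set.disjoint_left.mpr fun i hmax hmin =>
    huv ⟨v i - u i, funext fun j => by simp only [Pi.add_apply]; linarith [hmax j, hmin j]⟩
  refine ⟨(π, I), (π', J), sub_ne_zero.mpr (hπ.ne_of_disjoint hπ' hIJ), ?_⟩
  rw [dotProduct_add] at hgain hgain'
  dsimp only [biasHyperplane]
  rw [sub_dotProduct]
  linarith

end Shapley

theorem stmt0_general {n : ℕ}
    (A : Fin n → Type) [∀ i, Fintype (A i)] [∀ i, Nonempty (A i)]
    (B : ∀ i, A i → Type) [∀ i a, Fintype (B i a)] [∀ i a, Nonempty (B i a)]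
    (r : ∀ i, ∀ a : A i, B i a → ℝ) (P : ∀ i, ∀ a : A i, B i a → Fin n → ℝ)
    (hP : ∀ i a b, (∀ j, 0 ≤ P i a b j) ∧ ∑ j, P i a b j = 1)
    (T : (Fin n → ℝ) → (Fin n → ℝ)) (hT : T = shapleyOp A B r P) :
    ∃ (N : ℕ) (c : Fin N → Fin n → ℝ) (d : Fin N → ℝ),
      (∀ k, c k ≠ 0) ∧
      ∀ g : Fin n → ℝ, (∀ k, ∑ i, c k i * g i ≠ d k) →
        ∀ (u v : Fin n → ℝ) (lam mu : ℝ),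
          g + T u = (fun _ => lam) + u →
          g + T v = (fun _ => mu) + v →
          ∃ cst : ℝ, v = u + (fun _ => cst) := by
  subst hT
  obtain ⟨N, e, he⟩ := ((Set.finite_range (Function.uncurry (biasHyperplane P r))).inter_of_left
    {h | h.1 ≠ 0}).fin_embedding
  refine ⟨N, fun k => (e k).1, fun k => (e k).2, fun k => (he ▸ Set.mem_range_self k).2, ?_⟩
  intro g hg u v lam mu hu hv
  by_contra huv
  obtain ⟨x, y, hne, hmem⟩ := exists_biasHyperplane_of_ne_add_const hP hu hv huv
  obtain ⟨k, hk⟩ : biasHyperplane P r x y ∈ Set.range e := he ▸ ⟨⟨(x, y), rfl⟩, hne⟩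
  refine hg k ?_
  change (e k).1 ⬝ᵥ g = (e k).2
  rwa [hk]

/-- generic uniqueness of the bias vector, up to an additive constant,
for ergodic perfect-information finite stochastic games. -/
theorem stmt0 {n : ℕ} (hn : 0 < n)
    (A : Fin n → Type) [∀ i, Fintype (A i)] [∀ i, Nonempty (A i)]
    (B : ∀ i, A i → Type) [∀ i a, Fintype (B i a)] [∀ i a, Nonempty (B i a)]
    (r : ∀ i, ∀ a : A i, B i a → ℝ) (P : ∀ i, ∀ a : A i, B i a → Fin n → ℝ)
    (hP : ∀ i a b, (∀ j, 0 ≤ P i a b j) ∧ ∑ j, P i a b j = 1)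
    (T : (Fin n → ℝ) → (Fin n → ℝ)) (hT : T = shapleyOp A B r P)
    (herg : ∀ g : Fin n → ℝ, ∃ (lam : ℝ) (u : Fin n → ℝ),
      g + T u = (fun _ => lam) + u) :
    ∃ (N : ℕ) (c : Fin N → Fin n → ℝ) (d : Fin N → ℝ),
      (∀ k, c k ≠ 0) ∧
      ∀ g : Fin n → ℝ, (∀ k, ∑ i, c k i * g i ≠ d k) →
        ∀ (u v : Fin n → ℝ) (lam mu : ℝ),
          g + T u = (fun _ => lam) + u →
          g + T v = (fun _ => mu) + v →
          ∃ cst : ℝ, v = u + (fun _ => cst) :=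
  stmt0_general A B r P hP T hT
end

section
/- Let T : ℝⁿ → ℝⁿ be monotone and additively homogeneous, and assume the ergodic equation is solvable: there exist u₀ ∈ ℝⁿ and λ ∈ ℝ with T(u₀) = λe + u₀. Then the eigenspace E(T) = { x ∈ ℝⁿ : T(x) = λe + x } is a retract of ℝⁿ by a sup-norm nonexpansive map: there exists p : ℝⁿ → ℝⁿ satisfying ‖p(x) − p(y)‖_∞ ≤ ‖x − y‖_∞ for all x, y ∈ ℝⁿ, p ∘ p = p, and p(ℝⁿ) = E(T). In particular, E(T) is path-connected. -/
/-!
Subtracting `λ` reduces to a monotone additively homogeneous `S` with a fixed point, whose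
fixed points form `E(T)`. For such `S` the componentwise supremum of the subsolutions `z ≤ S z`
below `x` is again a subsolution, and if `x` is a supersolution it is even a fixed point (Tarski's
argument). Dually, the infimum of the supersolutions above `x` is a supersolution. Composing the
two envelopes gives a retraction onto the fixed points. Both envelopes are again monotone and
additively homogeneous, and any such map is sup-norm nonexpansive, since
`x ≤ y + ‖x - y‖e` gives `p x ≤ p y + ‖x - y‖e`.
-/

section SupNorm

variable {ι : Type*} [Fintype ι]

lemma le_add_norm_sub (x y : ι → ℝ) : x ≤ y + fun _ => ‖x - y‖ := fun i => by
  have := (le_abs_self _).trans (norm_le_pi_norm (x - y) i)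
  simp only [Pi.sub_apply, Pi.add_apply] at this ⊢
  linarith

lemma norm_sub_le_of_le_add {x y : ι → ℝ} {r : ℝ} (hr : 0 ≤ r)
    (hxy : x ≤ y + fun _ => r) (hyx : y ≤ x + fun _ => r) : ‖x - y‖ ≤ r := by
  refine (pi_norm_le_iff_of_nonneg hr).2 fun i => abs_sub_le_iff.2 ⟨?_, ?_⟩
  · linarith [show x i ≤ y i + r from hxy i]
  · linarith [show y i ≤ x i + r from hyx i]

end SupNorm

/-- Gunawardena's *topical* maps: monotone and additively homogeneous. -/
structure IsTopical {ι : Type*} (F : (ι → ℝ) → ι → ℝ) : Prop where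
  monotone : Monotone F
  map_add_const : ∀ (x : ι → ℝ) (c : ℝ), F (x + fun _ => c) = F x + fun _ => c

namespace IsTopical

variable {ι : Type*} {F G : (ι → ℝ) → ι → ℝ}

lemma map_le_map_add_of_le_add (hF : IsTopical F) {x y : ι → ℝ} {c : ℝ}
    (h : x ≤ y + fun _ => c) : F x ≤ F y + fun _ => c :=
  hF.map_add_const y c ▸ hF.monotone h

lemma map_sub_const (hF : IsTopical F) (x : ι → ℝ) (c : ℝ) :
    F (x - fun _ => c) = F x - fun _ => c := by
  simp only [sub_eq_add_neg]
  exact hF.map_add_const x (-c)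

lemma of_map_le_map_add
    (h : ∀ (x y : ι → ℝ) (c : ℝ), x ≤ y + (fun _ => c) → F x ≤ F y + fun _ => c) :
    IsTopical F where
  monotone x y hxy := by simpa [← Pi.zero_def] using h x y 0 (by simpa [← Pi.zero_def] using hxy)
  map_add_const x c := by
    refine le_antisymm (h _ _ c le_rfl) ?_
    have := h x (x + fun _ => c) (-c) (by intro i; simp)
    intro i
    have := this i
    simp only [Pi.add_apply] at this ⊢
    linarith

lemma comp (hF : IsTopical F) (hG : IsTopical G) : IsTopical (F ∘ G) where
  monotone := hF.monotone.comp hG.monotone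
  map_add_const x c := by simp only [Function.comp_apply, hG.map_add_const, hF.map_add_const]

lemma negConj (hF : IsTopical F) : IsTopical fun x => -F (-x) where
  monotone x y hxy := neg_le_neg (hF.monotone (neg_le_neg hxy))
  map_add_const x c := by
    have := hF.map_add_const (-x) (-c)
    rw [neg_add, show -(fun _ : ι => c) = fun _ => -c from rfl, this, neg_add]
    ext i; simp

lemma sub_const (hF : IsTopical F) (c : ℝ) : IsTopical fun x => F x - fun _ => c where
  monotone x y hxy := sub_le_sub_right (hF.monotone hxy) _
  map_add_const x d := by rw [hF.map_add_const]; abel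

lemma norm_sub_le [Fintype ι] (hF : IsTopical F) (x y : ι → ℝ) : ‖F x - F y‖ ≤ ‖x - y‖ :=
  norm_sub_le_of_le_add (norm_nonneg _) (hF.map_le_map_add_of_le_add (le_add_norm_sub x y))
    (norm_sub_rev x y ▸ hF.map_le_map_add_of_le_add (le_add_norm_sub y x))

lemma lipschitzWith_one [Fintype ι] (hF : IsTopical F) : LipschitzWith 1 F :=
  LipschitzWith.of_dist_le_mul fun x y => by
    simpa [dist_eq_norm] using hF.norm_sub_le x y

end IsTopical

section LowerEnvelope

variable {ι : Type*} {S : (ι → ℝ) → ι → ℝ}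

noncomputable def lowerEnvelope (S : (ι → ℝ) → ι → ℝ) (x : ι → ℝ) : ι → ℝ :=
  sSup {z | z ≤ S z ∧ z ≤ x}

lemma le_lowerEnvelope {x z : ι → ℝ} (hz : z ≤ S z) (hzx : z ≤ x) : z ≤ lowerEnvelope S x :=
  le_csSup ⟨x, fun _ hw => hw.2⟩ ⟨hz, hzx⟩

variable [Fintype ι] {u : ι → ℝ}

lemma nonempty_subsolutions_le (hS : IsTopical S) (hu : S u = u) (x : ι → ℝ) :
    {z | z ≤ S z ∧ z ≤ x}.Nonempty :=
  ⟨u - fun _ => ‖u - x‖, by rw [hS.map_sub_const, hu], sub_le_iff_le_add.2 (le_add_norm_sub u x)⟩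

lemma lowerEnvelope_le (hS : IsTopical S) (hu : S u = u) (x : ι → ℝ) : lowerEnvelope S x ≤ x :=
  csSup_le (nonempty_subsolutions_le hS hu x) fun _ hz => hz.2

lemma lowerEnvelope_le_map (hS : IsTopical S) (hu : S u = u) (x : ι → ℝ) :
    lowerEnvelope S x ≤ S (lowerEnvelope S x) :=
  csSup_le (nonempty_subsolutions_le hS hu x) fun _ hz =>
    hz.1.trans (hS.monotone (le_lowerEnvelope hz.1 hz.2))

lemma lowerEnvelope_eq_self (hS : IsTopical S) (hu : S u = u) {x : ι → ℝ} (hx : x ≤ S x) :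
    lowerEnvelope S x = x :=
  (lowerEnvelope_le hS hu x).antisymm (le_lowerEnvelope hx le_rfl)

lemma map_lowerEnvelope_of_map_le (hS : IsTopical S) (hu : S u = u) {x : ι → ℝ} (hx : S x ≤ x) :
    S (lowerEnvelope S x) = lowerEnvelope S x := by
  have hle := lowerEnvelope_le_map hS hu x
  refine le_antisymm (le_lowerEnvelope (hS.monotone hle) ?_) hle
  exact (hS.monotone (lowerEnvelope_le hS hu x)).trans hx

lemma isTopical_lowerEnvelope (hS : IsTopical S) (hu : S u = u) : IsTopical (lowerEnvelope S) :=
  IsTopical.of_map_le_map_add fun x y c hxy =>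
    csSup_le (nonempty_subsolutions_le hS hu x) fun z hz => sub_le_iff_le_add.1 <|
      le_lowerEnvelope (by rw [hS.map_sub_const]; exact sub_le_sub_right hz.1 _)
        (sub_le_iff_le_add.2 (hz.2.trans hxy))

end LowerEnvelope

section FixedPointRetraction

variable {ι : Type*} [Fintype ι] {S : (ι → ℝ) → ι → ℝ} {u : ι → ℝ}

/-- The infimum of the supersolutions `S z ≤ z` above `x`, via the symmetry `x ↦ -x`. -/
noncomputable def upperEnvelope (S : (ι → ℝ) → ι → ℝ) (x : ι → ℝ) : ι → ℝ :=
  -lowerEnvelope (fun z => -S (-z)) (-x)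

lemma isTopical_upperEnvelope (hS : IsTopical S) (hu : S u = u) : IsTopical (upperEnvelope S) :=
  (isTopical_lowerEnvelope (u := -u) hS.negConj (by simp [hu])).negConj

lemma map_upperEnvelope_le (hS : IsTopical S) (hu : S u = u) (x : ι → ℝ) :
    S (upperEnvelope S x) ≤ upperEnvelope S x :=
  le_neg.1 (lowerEnvelope_le_map (u := -u) hS.negConj (by simp [hu]) (-x))

lemma upperEnvelope_eq_self (hS : IsTopical S) (hu : S u = u) {x : ι → ℝ} (hx : S x = x) :
    upperEnvelope S x = x := by
  rw [upperEnvelope, lowerEnvelope_eq_self (u := -u) hS.negConj (by simp [hu]) (by simp [hx]),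
    neg_neg]

noncomputable def fixedPointRetraction (S : (ι → ℝ) → ι → ℝ) : (ι → ℝ) → ι → ℝ :=
  lowerEnvelope S ∘ upperEnvelope S

lemma isTopical_fixedPointRetraction (hS : IsTopical S) (hu : S u = u) :
    IsTopical (fixedPointRetraction S) :=
  (isTopical_lowerEnvelope hS hu).comp (isTopical_upperEnvelope hS hu)

lemma map_fixedPointRetraction (hS : IsTopical S) (hu : S u = u) (x : ι → ℝ) :
    S (fixedPointRetraction S x) = fixedPointRetraction S x :=
  map_lowerEnvelope_of_map_le hS hu (map_upperEnvelope_le hS hu x)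

lemma fixedPointRetraction_eq_self (hS : IsTopical S) (hu : S u = u) {x : ι → ℝ} (hx : S x = x) :
    fixedPointRetraction S x = x := by
  rw [fixedPointRetraction, Function.comp_apply, upperEnvelope_eq_self hS hu hx,
    lowerEnvelope_eq_self hS hu hx.ge]

lemma range_fixedPointRetraction (hS : IsTopical S) (hu : S u = u) :
    Set.range (fixedPointRetraction S) = {x | S x = x} :=
  subset_antisymm (Set.range_subset_iff.2 (map_fixedPointRetraction hS hu))
    fun x hx => ⟨x, fixedPointRetraction_eq_self hS hu hx⟩

end FixedPointRetraction

theorem stmt1_general {n : ℕ} (T : (Fin n → ℝ) → (Fin n → ℝ))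
    (hmono : ∀ x y : Fin n → ℝ, x ≤ y → T x ≤ T y)
    (hhom : ∀ (x : Fin n → ℝ) (c : ℝ), T (x + fun _ => c) = T x + fun _ => c)
    (u₀ : Fin n → ℝ) (lam : ℝ) (h : T u₀ = (fun _ => lam) + u₀) :
    ∃ p : (Fin n → ℝ) → (Fin n → ℝ),
      (∀ x y : Fin n → ℝ, ‖p x - p y‖ ≤ ‖x - y‖) ∧
      p ∘ p = p ∧
      Set.range p = {x | T x = (fun _ => lam) + x} ∧
      IsPathConnected {x | T x = (fun _ => lam) + x} := by
  set S : (Fin n → ℝ) → Fin n → ℝ := fun x => T x - fun _ => lam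
  have hS : IsTopical S := IsTopical.sub_const ⟨fun x y => hmono x y, hhom⟩ lam
  have hu₀ : S u₀ = u₀ := sub_eq_iff_eq_add'.2 h
  have hE : {x | T x = (fun _ => lam) + x} = {x | S x = x} := by
    ext x
    exact sub_eq_iff_eq_add'.symm
  have hp := isTopical_fixedPointRetraction hS hu₀
  refine ⟨fixedPointRetraction S, hp.norm_sub_le, ?_, ?_, ?_⟩
  · exact funext fun x => fixedPointRetraction_eq_self hS hu₀ (map_fixedPointRetraction hS hu₀ x)
  · rw [hE, range_fixedPointRetraction hS hu₀]
  · rw [hE, ← range_fixedPointRetraction hS hu₀]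
    exact isPathConnected_range hp.lipschitzWith_one.continuous

/-- the eigenspace of a monotone additively homogeneous map whose ergodic
equation is solvable is a nonexpansive retract of `ℝⁿ`; in particular it is path-connected.
Here `Fin n → ℝ` carries the sup-norm. -/
theorem stmt1 {n : ℕ} (hn : 0 < n) (T : (Fin n → ℝ) → (Fin n → ℝ))
    (hmono : ∀ x y : Fin n → ℝ, x ≤ y → T x ≤ T y)
    (hhom : ∀ (x : Fin n → ℝ) (c : ℝ), T (x + fun _ => c) = T x + fun _ => c)
    (u₀ : Fin n → ℝ) (lam : ℝ) (h : T u₀ = (fun _ => lam) + u₀) :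
    ∃ p : (Fin n → ℝ) → (Fin n → ℝ),
      (∀ x y : Fin n → ℝ, ‖p x - p y‖ ≤ ‖x - y‖) ∧
      p ∘ p = p ∧
      Set.range p = {x | T x = (fun _ => lam) + x} ∧
      IsPathConnected {x | T x = (fun _ => lam) + x} :=
  stmt1_general T hmono hhom u₀ lam h
end

section
/- Let T : ℝⁿ → ℝⁿ be a perfect-information finite Shapley operator. Assume T admits an invariant half-line with direction ν (i.e., T(u + αν) = u + (α+1)ν for some u and all α large enough) and that each reduced operator T^σ admits an invariant half-line with direction ν^σ (these hypotheses hold automatically by Kohlberg's theorem). Then the upper mean payoffs satisfy max_{1≤i≤n} ν_i = min_σ max_{1≤i≤n} ν^σ_i, where the minimum is over all policies σ of player Min. -/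
/-- Reduced Shapley operator `T^σ` obtained by fixing a policy `σ` of player Min. -/
noncomputable def reducedOp {n : ℕ} (A : Fin n → Type)
    (B : ∀ i, A i → Type) [∀ i a, Fintype (B i a)] [∀ i a, Nonempty (B i a)]
    (r : ∀ i, ∀ a : A i, B i a → ℝ) (P : ∀ i, ∀ a : A i, B i a → Fin n → ℝ)
    (σ : ∀ i, A i) : (Fin n → ℝ) → (Fin n → ℝ) :=
  fun x i => ⨆ b : B i (σ i), (r i (σ i) b + ∑ j, P i (σ i) b j * x j)

open Filter

section HalfLine

variable {ι : Type*}

def IsInvariantHalfLine (F : (ι → ℝ) → ι → ℝ) (u ν : ι → ℝ) (α₀ : ℝ) : Prop :=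
  ∀ α ≥ α₀, F (u + α • ν) = u + (α + 1) • ν

theorem IsInvariantHalfLine.iterate_apply {F : (ι → ℝ) → ι → ℝ} {u ν : ι → ℝ} {α₀ : ℝ}
    (hF : IsInvariantHalfLine F u ν α₀) (k : ℕ) :
    F^[k] (u + α₀ • ν) = u + (α₀ + k) • ν := by
  induction k with
  | zero => simp
  | succ k ih =>
    rw [Function.iterate_succ_apply', ih, hF _ (le_add_of_nonneg_right k.cast_nonneg)]
    push_cast
    ring_nf

theorem iterate_le_iterate_add {F G : (ι → ℝ) → ι → ℝ} (hFG : ∀ x, F x ≤ G x)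
    (hG : ∀ x y c, (∀ j, x j ≤ y j + c) → ∀ i, G x i ≤ G y i + c)
    {x y : ι → ℝ} {c : ℝ} (hxy : ∀ j, x j ≤ y j + c) (k : ℕ) :
    ∀ i, F^[k] x i ≤ G^[k] y i + c := by
  induction k with
  | zero => exact hxy
  | succ k ih =>
    intro i
    rw [Function.iterate_succ_apply', Function.iterate_succ_apply']
    exact (hFG _ i).trans (hG _ _ c ih i)

theorem le_of_forall_nat_add_mul_le {a b a' b' : ℝ} (h : ∀ k : ℕ, a + k * b ≤ a' + k * b') :
    b ≤ b' := by
  by_contra! hlt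
  obtain ⟨k, hk⟩ := exists_nat_gt ((a' - a) / (b - b'))
  rw [div_lt_iff₀ (sub_pos.2 hlt), mul_sub] at hk
  linarith [h k]

theorem IsInvariantHalfLine.le_of_le [Finite ι] {F G : (ι → ℝ) → ι → ℝ}
    (hFG : ∀ x, F x ≤ G x) (hG : ∀ x y c, (∀ j, x j ≤ y j + c) → ∀ i, G x i ≤ G y i + c)
    {u ν u' ν' : ι → ℝ} {α₀ α₀' : ℝ}
    (hF : IsInvariantHalfLine F u ν α₀) (hG' : IsInvariantHalfLine G u' ν' α₀') : ν ≤ ν' := by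
  set x := u + α₀ • ν
  set y := u' + α₀' • ν'
  set c := ⨆ j, (x j - y j)
  have hxy : ∀ j, x j ≤ y j + c := fun j => by
    linarith [le_ciSup (Set.finite_range fun j => x j - y j).bddAbove j]
  intro i
  refine le_of_forall_nat_add_mul_le (a := u i + α₀ * ν i) (a' := u' i + α₀' * ν' i + c)
    fun k => ?_
  have hk := iterate_le_iterate_add hFG hG hxy k i
  rw [hF.iterate_apply, hG'.iterate_apply] at hk
  simp only [Pi.add_apply, Pi.smul_apply, smul_eq_mul] at hk
  linarith

end HalfLine

section Affine

variable {κ : Type*} [Finite κ] [Nonempty κ]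

-- The witness is the lexicographic maximum of `(s, c)`.
theorem exists_eventually_forall_affine_le (c s : κ → ℝ) :
    ∃ j, ∀ᶠ α in atTop, ∀ k, c k + α * s k ≤ c j + α * s j := by
  obtain ⟨j, hj⟩ := Finite.exists_max fun k => toLex (s k, c k)
  refine ⟨j, eventually_all.2 fun k => ?_⟩
  rcases Prod.Lex.le_iff.1 (hj k) with hlt | ⟨heq, hle⟩
  · have hlim : Tendsto (fun α => α * (s j - s k)) atTop atTop :=
      tendsto_id.atTop_mul_const (sub_pos.2 hlt)
    filter_upwards [hlim.eventually_ge_atTop (c k - c j)] with α hα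
    linarith
  · exact Eventually.of_forall fun α => by
      simp only [ofLex_toLex] at heq hle
      rw [heq]
      linarith

theorem exists_eventually_iSup_affine_eq (c s : κ → ℝ) :
    ∃ j, ∀ᶠ α in atTop, ⨆ k, (c k + α * s k) = c j + α * s j := by
  obtain ⟨j, hj⟩ := exists_eventually_forall_affine_le c s
  exact ⟨j, hj.mono fun α hα =>
    (IsGreatest.isLUB ⟨Set.mem_range_self j, Set.forall_mem_range.2 hα⟩).ciSup_eq⟩

theorem exists_eventually_iInf_affine_eq (c s : κ → ℝ) :
    ∃ j, ∀ᶠ α in atTop, ⨅ k, (c k + α * s k) = c j + α * s j := by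
  obtain ⟨j, hj⟩ := exists_eventually_forall_affine_le (-c) (-s)
  refine ⟨j, hj.mono fun α hα => (IsLeast.isGLB ⟨Set.mem_range_self j,
    Set.forall_mem_range.2 fun k => ?_⟩).ciInf_eq⟩
  have := hα k
  simp only [Pi.neg_apply] at this
  linarith

end Affine

theorem sum_mul_add_smul {ι : Type*} [Fintype ι] (p x y : ι → ℝ) (α : ℝ) :
    ∑ j, p j * (x + α • y) j = ∑ j, p j * x j + α * ∑ j, p j * y j := by
  simp only [Pi.add_apply, Pi.smul_apply, smul_eq_mul, mul_add, Finset.sum_add_distrib,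
    Finset.mul_sum, mul_left_comm]

section Shapley

variable {n : ℕ} {A : Fin n → Type} {B : ∀ i, A i → Type} [∀ i a, Fintype (B i a)]
  [∀ i a, Nonempty (B i a)] {r : ∀ i, ∀ a : A i, B i a → ℝ} {P : ∀ i, ∀ a : A i, B i a → Fin n → ℝ}

theorem shapleyOp_le_reducedOp [∀ i, Fintype (A i)] [∀ i, Nonempty (A i)] (σ : ∀ i, A i)
    (x : Fin n → ℝ) : shapleyOp A B r P x ≤ reducedOp A B r P σ x :=
  fun i => ciInf_le (Set.finite_range _).bddBelow (σ i)

theorem reducedOp_le_add (hP : ∀ i a b, (∀ j, 0 ≤ P i a b j) ∧ ∑ j, P i a b j = 1)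
    (σ : ∀ i, A i) (x y : Fin n → ℝ) (c : ℝ) (h : ∀ j, x j ≤ y j + c) (i : Fin n) :
    reducedOp A B r P σ x i ≤ reducedOp A B r P σ y i + c := by
  refine ciSup_le fun b => ?_
  obtain ⟨hP₀, hP₁⟩ := hP i (σ i) b
  have hsum : ∑ j, P i (σ i) b j * x j ≤ ∑ j, P i (σ i) b j * y j + c :=
    calc ∑ j, P i (σ i) b j * x j ≤ ∑ j, P i (σ i) b j * (y j + c) :=
          Finset.sum_le_sum fun j _ => mul_le_mul_of_nonneg_left (h j) (hP₀ j)
      _ = ∑ j, P i (σ i) b j * y j + c := by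
          simp only [mul_add, Finset.sum_add_distrib, ← Finset.sum_mul, hP₁, one_mul]
  have hb := le_ciSup (Set.finite_range fun b =>
    r i (σ i) b + ∑ j, P i (σ i) b j * y j).bddAbove b
  unfold reducedOp
  linarith

theorem exists_policy_eventually_reducedOp_eq_shapleyOp [∀ i, Fintype (A i)]
    [∀ i, Nonempty (A i)] (u ν : Fin n → ℝ) :
    ∃ σ : ∀ i, A i, ∀ᶠ α : ℝ in atTop,
      reducedOp A B r P σ (u + α • ν) = shapleyOp A B r P (u + α • ν) := by
  choose τ hτ using fun i a =>
    exists_eventually_iSup_affine_eq (fun b => r i a b + ∑ j, P i a b j * u j)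
      (fun b => ∑ j, P i a b j * ν j)
  choose σ hσ using fun i =>
    exists_eventually_iInf_affine_eq (fun a => r i a (τ i a) + ∑ j, P i a (τ i a) j * u j)
      (fun a => ∑ j, P i a (τ i a) j * ν j)
  refine ⟨σ, ?_⟩
  filter_upwards [eventually_all.2 fun i => eventually_all.2 (hτ i), eventually_all.2 hσ]
    with α hτα hσα
  funext i
  simp only [reducedOp, shapleyOp, sum_mul_add_smul, ← add_assoc, hτα, hσα]

end Shapley

theorem stmt4_general {n : ℕ}
    (A : Fin n → Type) [∀ i, Fintype (A i)] [∀ i, Nonempty (A i)]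
    (B : ∀ i, A i → Type) [∀ i a, Fintype (B i a)] [∀ i a, Nonempty (B i a)]
    (r : ∀ i, ∀ a : A i, B i a → ℝ) (P : ∀ i, ∀ a : A i, B i a → Fin n → ℝ)
    (hP : ∀ i a b, (∀ j, 0 ≤ P i a b j) ∧ ∑ j, P i a b j = 1)
    (T : (Fin n → ℝ) → (Fin n → ℝ)) (hT : T = shapleyOp A B r P)
    (u ν : Fin n → ℝ) (α₀ : ℝ)
    (hhalf : ∀ α ≥ α₀, T (u + α • ν) = u + (α + 1) • ν)
    (νs : (∀ i, A i) → Fin n → ℝ)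
    (hhalfσ : ∀ σ : ∀ i, A i, ∃ (uσ : Fin n → ℝ) (ασ : ℝ),
      ∀ α ≥ ασ, reducedOp A B r P σ (uσ + α • νs σ) = uσ + (α + 1) • νs σ) :
    (⨆ i, ν i) = ⨅ σ : ∀ i, A i, ⨆ i, νs σ i := by
  subst hT
  apply le_antisymm
  · refine le_ciInf fun σ => ?_
    obtain ⟨uσ, ασ, hσ⟩ := hhalfσ σ
    exact ciSup_mono (Set.finite_range _).bddAbove
      (IsInvariantHalfLine.le_of_le (shapleyOp_le_reducedOp σ) (reducedOp_le_add hP σ) hhalf hσ)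
  · obtain ⟨σ, hσT⟩ := exists_policy_eventually_reducedOp_eq_shapleyOp (B := B) (r := r) (P := P) u ν
    obtain ⟨uσ, ασ, hσ⟩ := hhalfσ σ
    obtain ⟨α₁, hα₁⟩ := eventually_atTop.1 (hσT.and (eventually_ge_atTop α₀))
    have hσν : IsInvariantHalfLine (reducedOp A B r P σ) u ν α₁ := fun α hα => by
      rw [(hα₁ α hα).1, hhalf α (hα₁ α hα).2]
    calc (⨅ σ : ∀ i, A i, ⨆ i, νs σ i) ≤ ⨆ i, νs σ i := ciInf_le (Set.finite_range _).bddBelow σ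
      _ ≤ ⨆ i, ν i := ciSup_mono (Set.finite_range _).bddAbove
          (IsInvariantHalfLine.le_of_le (fun _ => le_rfl) (reducedOp_le_add hP σ) hσ hσν)

/-- the upper mean payoff of `T` is the minimum over policies `σ` of player
Min of the upper mean payoffs of the reduced operators `T^σ`:
`max_i ν_i = min_σ max_i ν^σ_i`. -/
theorem stmt4 {n : ℕ} (hn : 0 < n)
    (A : Fin n → Type) [∀ i, Fintype (A i)] [∀ i, Nonempty (A i)]
    (B : ∀ i, A i → Type) [∀ i a, Fintype (B i a)] [∀ i a, Nonempty (B i a)]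
    (r : ∀ i, ∀ a : A i, B i a → ℝ) (P : ∀ i, ∀ a : A i, B i a → Fin n → ℝ)
    (hP : ∀ i a b, (∀ j, 0 ≤ P i a b j) ∧ ∑ j, P i a b j = 1)
    (T : (Fin n → ℝ) → (Fin n → ℝ)) (hT : T = shapleyOp A B r P)
    (u ν : Fin n → ℝ) (α₀ : ℝ)
    (hhalf : ∀ α ≥ α₀, T (u + α • ν) = u + (α + 1) • ν)
    (νs : (∀ i, A i) → Fin n → ℝ)
    (hhalfσ : ∀ σ : ∀ i, A i, ∃ (uσ : Fin n → ℝ) (ασ : ℝ),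
      ∀ α ≥ ασ, reducedOp A B r P σ (uσ + α • νs σ) = uσ + (α + 1) • νs σ) :
    (⨆ i, ν i) = ⨅ σ : ∀ i, A i, ⨆ i, νs σ i :=
  stmt4_general A B r P hP T hT u ν α₀ hhalf νs hhalfσ
end

section
/- Let T : ℝⁿ → ℝⁿ be a one-player Shapley operator such that T(u) = λe + u for some u ∈ ℝⁿ and λ ∈ ℝ. If there is a unique probability vector m* such that ⟨m*, r^τ⟩ = λ and m* ∈ M(P^τ) for some deterministic policy τ, then T has a unique critical class, namely the support { i : m*_i > 0 } of m*. -/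
/-- One-player Shapley operator `T_i(x) = max_{b ∈ B i} ( r i b + ⟨P i b, x⟩ )`. -/
noncomputable def onePlayerOp {n : ℕ} (B : Fin n → Type) [∀ i, Fintype (B i)]
    [∀ i, Nonempty (B i)] (r : ∀ i, B i → ℝ) (P : ∀ i, B i → Fin n → ℝ) :
    (Fin n → ℝ) → (Fin n → ℝ) :=
  fun x i => ⨆ b : B i, (r i b + ∑ j, P i b j * x j)

/-- `m` is an invariant probability vector of the stochastic matrix `Q` (rows `Q i`). -/
def isInvProb {n : ℕ} (Q : Fin n → Fin n → ℝ) (m : Fin n → ℝ) : Prop :=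
  (∀ i, 0 ≤ m i) ∧ (∑ i, m i) = 1 ∧ ∀ j, ∑ i, m i * Q i j = m j

/-- The set `M(Q)` of invariant probability vectors of `Q`. -/
def invProbSet {n : ℕ} (Q : Fin n → Fin n → ℝ) : Set (Fin n → ℝ) :=
  {m | isInvProb Q m}

/-- A randomized policy: `t i` is a probability vector on `B i`. -/
def isRandPolicy {n : ℕ} (B : Fin n → Type) [∀ i, Fintype (B i)]
    (t : ∀ i, B i → ℝ) : Prop :=
  (∀ i b, 0 ≤ t i b) ∧ ∀ i, (∑ b, t i b) = 1

/-- Transition matrix `P^t` of a randomized policy `t`. -/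
def randMatrix {n : ℕ} (B : Fin n → Type) [∀ i, Fintype (B i)]
    (P : ∀ i, B i → Fin n → ℝ) (t : ∀ i, B i → ℝ) : Fin n → Fin n → ℝ :=
  fun i j => ∑ b, t i b * P i b j

/-- Payment vector `r^t` of a randomized policy `t`. -/
def randPayment {n : ℕ} (B : Fin n → Type) [∀ i, Fintype (B i)]
    (r : ∀ i, B i → ℝ) (t : ∀ i, B i → ℝ) : Fin n → ℝ :=
  fun i => ∑ b, t i b * r i b

/-- `m` is a maximizing measure: `⟨m, r^t⟩ = lam` and `m` is an extreme point of
`M(P^t)` for some randomized policy `t`. -/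
def isMaximizing {n : ℕ} (B : Fin n → Type) [∀ i, Fintype (B i)]
    (r : ∀ i, B i → ℝ) (P : ∀ i, B i → Fin n → ℝ) (lam : ℝ) (m : Fin n → ℝ) : Prop :=
  ∃ t : ∀ i, B i → ℝ, isRandPolicy B t ∧
    (∑ i, m i * randPayment B r t i) = lam ∧
    m ∈ Set.extremePoints ℝ (invProbSet (randMatrix B P t))

/-- `I` is a critical class: it is the support of a maximizing measure and is maximal
with respect to inclusion among all supports of maximizing measures. -/
def isCriticalClass {n : ℕ} (B : Fin n → Type) [∀ i, Fintype (B i)]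
    (r : ∀ i, B i → ℝ) (P : ∀ i, B i → Fin n → ℝ) (lam : ℝ) (I : Set (Fin n)) : Prop :=
  (∃ m, isMaximizing B r P lam m ∧ I = {i | 0 < m i}) ∧
  ∀ m', isMaximizing B r P lam m' → I ⊆ {i | 0 < m' i} → {i | 0 < m' i} = I

/-! The vector `u` makes every action `b` at every state `i` have a nonnegative slack
`s_i^b = λ + u_i - r_i^b - ⟨P_i^b, u⟩`, and for a randomized policy `t` with invariant vector `m`
one has `⟨m, r^t⟩ = λ - ∑ m_i t_i^b s_i^b`. Hence `m*` is the unique maximizer of `⟨·, r^τ⟩` on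
`M(P^τ)`, so an extreme point: a maximizing measure.

Conversely let `m` be a maximizing measure for `t`. Every action played by `t` on the support of
`m` has zero slack, so a deterministic policy choosing such actions has an invariant vector inside
the (closed) support of `m`, of value `λ`, which must be `m*`. Comparing two such policies that
differ at a single state shows that `m*` is invariant for `P^t` as well, and it lives on the
support of `m`; as `m` is extreme in `M(P^t)`, `m = m*`. So `m*` is the only maximizing measure.
-/

open Finset Filter Topology

section InvariantMeasures

variable {n : ℕ} {Q : Fin n → Fin n → ℝ}

lemma isInvProb.sum_mul_sum_mul {m : Fin n → ℝ} (hm : isInvProb Q m) (u : Fin n → ℝ) :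
    ∑ i, m i * ∑ j, Q i j * u j = ∑ j, m j * u j := by
  simp only [mul_sum, ← mul_assoc]
  rw [sum_comm]
  simp only [← sum_mul, hm.2.2]

lemma isInvProb.pos_of_pos (hQ : ∀ i j, 0 ≤ Q i j) {m : Fin n → ℝ} (hm : isInvProb Q m)
    {i j : Fin n} (hi : 0 < m i) (hij : 0 < Q i j) : 0 < m j :=
  calc 0 < m i * Q i j := mul_pos hi hij
    _ ≤ ∑ k, m k * Q k j :=
      single_le_sum (f := fun k => m k * Q k j) (fun k _ => mul_nonneg (hm.1 k) (hQ k j))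
        (mem_univ i)
    _ = m j := hm.2.2 j

lemma isInvProb.exists_pos {m : Fin n → ℝ} (hm : isInvProb Q m) : ∃ i, 0 < m i := by
  by_contra! h
  have : ∑ i, m i = 0 := sum_eq_zero fun i _ => le_antisymm (h i) (hm.1 i)
  linarith [hm.2.1]

lemma isInvProb.affine {a b : Fin n → ℝ} (ha : isInvProb Q a) (hb : isInvProb Q b)
    (s : ℝ) (hnonneg : ∀ i, 0 ≤ s * a i + (1 - s) * b i) :
    isInvProb Q (fun i => s * a i + (1 - s) * b i) := by
  refine ⟨hnonneg, ?_, fun j => ?_⟩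
  · rw [sum_add_distrib, ← mul_sum, ← mul_sum, ha.2.1, hb.2.1]
    ring
  · simp only [add_mul, sum_add_distrib, mul_assoc, ← mul_sum, ha.2.2, hb.2.2]

/-- 1 is an eigenvalue of `Q`, since `Q` fixes the constant vectors. -/
lemma exists_ne_zero_vecMul_eq (hn : 0 < n) (hQ : ∀ i, Q i ∈ stdSimplex ℝ (Fin n)) :
    ∃ v : Fin n → ℝ, v ≠ 0 ∧ ∀ j, ∑ i, v i * Q i j = v j := by
  set A : Matrix (Fin n) (Fin n) ℝ := Matrix.of Q
  have hdet : (A - 1).det = 0 := by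
    refine Matrix.exists_mulVec_eq_zero_iff.1 ⟨fun _ => 1, fun h => ?_, ?_⟩
    · simpa using congrFun h ⟨0, hn⟩
    · rw [Matrix.sub_mulVec, Matrix.one_mulVec, sub_eq_zero]
      ext i
      simp [Matrix.mulVec, dotProduct, A, (hQ i).2]
  obtain ⟨v, hv, hvA⟩ := Matrix.exists_vecMul_eq_zero_iff.2 hdet
  refine ⟨v, hv, fun j => ?_⟩
  rw [Matrix.vecMul_sub, Matrix.vecMul_one, sub_eq_zero] at hvA
  exact congrFun hvA j

/-- The absolute value of an invariant signed vector is subinvariant with the same total mass,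
hence invariant; normalizing it gives an invariant probability vector. -/
lemma exists_isInvProb (hn : 0 < n) (hQ : ∀ i, Q i ∈ stdSimplex ℝ (Fin n)) :
    ∃ m, isInvProb Q m := by
  obtain ⟨v, hv, hvQ⟩ := exists_ne_zero_vecMul_eq hn hQ
  set w : Fin n → ℝ := fun i => |v i|
  have hsub : ∀ j, w j ≤ ∑ i, w i * Q i j := fun j =>
    calc w j = |∑ i, v i * Q i j| := by rw [hvQ j]
      _ ≤ ∑ i, |v i * Q i j| := abs_sum_le_sum_abs _ _
      _ = ∑ i, w i * Q i j := by simp only [abs_mul, abs_of_nonneg ((hQ _).1 _), w]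
  have hmass : ∑ j, ∑ i, w i * Q i j = ∑ j, w j := by
    rw [sum_comm]
    simp only [← mul_sum, (hQ _).2, mul_one]
  have hinv : ∀ j, ∑ i, w i * Q i j = w j := fun j =>
    ((sum_eq_sum_iff_of_le fun j _ => hsub j).1 hmass.symm j (mem_univ j)).symm
  have hpos : 0 < ∑ i, w i := by
    obtain ⟨i, hi⟩ := Function.ne_iff.1 hv
    exact sum_pos' (fun i _ => abs_nonneg _) ⟨i, mem_univ i, abs_pos.2 hi⟩
  refine ⟨fun i => w i / ∑ k, w k, fun i => by positivity, ?_, fun j => ?_⟩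
  · rw [← sum_div, div_self hpos.ne']
  · simp only [div_mul_eq_mul_div, ← sum_div, hinv]

/-- Rows outside `C` are redirected to a point of `C`; an invariant vector of the modified
matrix puts no mass outside `C`, so it is invariant for `Q` as well. -/
lemma exists_isInvProb_subset (hQ : ∀ i, Q i ∈ stdSimplex ℝ (Fin n)) {C : Set (Fin n)}
    {i₀ : Fin n} (hi₀ : i₀ ∈ C) (hC : ∀ i ∈ C, ∀ j, 0 < Q i j → j ∈ C) :
    ∃ m, isInvProb Q m ∧ ∀ i, 0 < m i → i ∈ C := by
  classical
  set Q' : Fin n → Fin n → ℝ := fun i => if i ∈ C then Q i else Pi.single i₀ 1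
  have hQ' : ∀ i, Q' i ∈ stdSimplex ℝ (Fin n) := fun i => by
    by_cases hi : i ∈ C
    · simpa [Q', hi] using hQ i
    · simpa [Q', hi] using single_mem_stdSimplex ℝ i₀
  obtain ⟨m, hm⟩ := exists_isInvProb i₀.pos hQ'
  have hQ'C : ∀ i j, j ∉ C → Q' i j = 0 := fun i j hj => by
    by_cases hi : i ∈ C
    · simpa [Q', hi] using le_antisymm (not_lt.1 fun h => hj (hC i hi j h)) ((hQ i).1 j)
    · simp [Q', hi, show j ≠ i₀ from fun h => hj (h ▸ hi₀)]
  have hm0 : ∀ j, j ∉ C → m j = 0 := fun j hj => by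
    simp [← hm.2.2 j, hQ'C _ j hj]
  refine ⟨m, ⟨hm.1, hm.2.1, fun j => ?_⟩, fun i hi => by_contra fun hiC => hi.ne' (hm0 i hiC)⟩
  rw [← hm.2.2 j]
  refine sum_congr rfl fun i _ => ?_
  by_cases hi : i ∈ C
  · simp [Q', hi]
  · simp [hm0 i hi]

/-- `m` is a proper convex combination of `m'` and of an invariant vector obtained by moving
slightly beyond `m` away from `m'`, which stays nonnegative because `m'` lives on the support
of `m`. -/
lemma eq_of_mem_extremePoints_invProbSet {m m' : Fin n → ℝ}
    (hm : m ∈ (invProbSet Q).extremePoints ℝ) (hm' : isInvProb Q m')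
    (hsupp : ∀ i, 0 < m' i → 0 < m i) : m' = m := by
  have hev : ∀ᶠ s in 𝓝[>] (1 : ℝ), ∀ i, 0 ≤ s * m i + (1 - s) * m' i := by
    refine Filter.eventually_all.2 fun i => ?_
    rcases (hm.1.1 i).eq_or_lt with h | h
    · have : m' i = 0 := le_antisymm (not_lt.1 fun h' => (hsupp i h').ne' h.symm) (hm'.1 i)
      simp [← h, this]
    · have : ContinuousAt (fun s : ℝ => s * m i + (1 - s) * m' i) 1 := by fun_prop
      exact nhdsWithin_le_nhds
        ((this.eventually (lt_mem_nhds (by simpa using h))).mono fun s hs => hs.le)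
  obtain ⟨s, hs, hs1⟩ := (hev.and self_mem_nhdsWithin).exists
  have hs0 : 0 < s := zero_lt_one.trans hs1
  have hseg : m ∈ openSegment ℝ (fun i => s * m i + (1 - s) * m' i) m' := by
    refine ⟨s⁻¹, 1 - s⁻¹, by positivity, sub_pos.2 (inv_lt_one_of_one_lt₀ hs1), by ring, ?_⟩
    ext i
    simp only [Pi.add_apply, Pi.smul_apply, smul_eq_mul]
    field_simp
    ring
  exact ((mem_extremePoints.1 hm).2 _ (isInvProb.affine hm.1 hm' s hs) m' hm'
    hseg).2

end InvariantMeasures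

lemma mem_extremePoints_of_forall_le {E : Type*} [AddCommGroup E] [Module ℝ E] {A : Set E}
    {x : E} (f : E →ₗ[ℝ] ℝ) (hx : x ∈ A) (hle : ∀ y ∈ A, f y ≤ f x)
    (huniq : ∀ y ∈ A, f y = f x → y = x) : x ∈ A.extremePoints ℝ := by
  refine ⟨hx, fun y₁ hy₁ y₂ hy₂ ⟨a, b, ha, hb, hab, hxy⟩ => huniq y₁ hy₁ ?_⟩
  have hfx : a * f y₁ + b * f y₂ = f x := by simp [← hxy]
  refine le_antisymm (hle y₁ hy₁) (not_lt.1 fun hlt => ?_)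
  have : a * f x + b * f x = f x := by rw [← add_mul, hab, one_mul]
  linarith [mul_lt_mul_of_pos_left hlt ha, mul_le_mul_of_nonneg_left (hle y₂ hy₂) hb.le]

section Shapley

variable {n : ℕ} {B : Fin n → Type}
  (r : ∀ i, B i → ℝ) (P : ∀ i, B i → Fin n → ℝ) (u : Fin n → ℝ) (lam : ℝ)

def slack (i : Fin n) (b : B i) : ℝ := lam + u i - (r i b + ∑ j, P i b j * u j)

lemma slack_nonneg_of_onePlayerOp_eq [∀ i, Fintype (B i)] [∀ i, Nonempty (B i)]
    (h : onePlayerOp B r P u = (fun _ => lam) + u) (i : Fin n) (b : B i) :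
    0 ≤ slack r P u lam i b := by
  have hi := congrFun h i
  simp only [onePlayerOp, Pi.add_apply] at hi
  rw [slack, sub_nonneg, ← hi]
  exact le_ciSup (f := fun b => r i b + ∑ j, P i b j * u j) (Set.finite_range _).bddAbove b

variable {r P u lam}

lemma mul_eq_mul_of_isInvProb_update {μ : Fin n → ℝ} {σ : ∀ i, B i}
    (hσ : isInvProb (fun i j => P i (σ i) j) μ) {i : Fin n} {b : B i}
    (hb : isInvProb (fun k j => P k (Function.update σ i b k) j) μ) (j : Fin n) :
    μ i * P i b j = μ i * P i (σ i) j := by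
  have h := (hb.2.2 j).trans (hσ.2.2 j).symm
  rw [← add_sum_erase _ _ (mem_univ i), ← add_sum_erase _ _ (mem_univ i)] at h
  beta_reduce at h
  rw [Function.update_self, sum_congr rfl fun k hk => by
    rw [Function.update_of_ne (ne_of_mem_erase hk)]] at h
  exact add_right_cancel h

variable [∀ i, Fintype (B i)]

lemma sum_mul_randPayment_add_sum_mul_slack {t : ∀ i, B i → ℝ} (ht : isRandPolicy B t)
    {m : Fin n → ℝ} (hm : isInvProb (randMatrix B P t) m) :
    ∑ i, m i * randPayment B r t i + ∑ i, m i * ∑ b, t i b * slack r P u lam i b = lam := by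
  have hrow : ∀ i, ∑ b, t i b * slack r P u lam i b
      = lam + u i - randPayment B r t i - ∑ j, randMatrix B P t i j * u j := fun i => by
    simp only [slack, randPayment, randMatrix, mul_sub, mul_add, sum_sub_distrib,
      sum_add_distrib, ← sum_mul, ht.2 i, one_mul]
    simp only [mul_sum, sum_mul, mul_assoc]
    rw [sub_sub]
    congr 2
    exact sum_comm
  simp only [hrow, mul_sub, mul_add, sum_sub_distrib, sum_add_distrib, ← sum_mul, hm.2.1,
    hm.sum_mul_sum_mul]
  ring

lemma slack_eq_zero_of_sum_mul_randPayment_eq (hu : ∀ i b, 0 ≤ slack r P u lam i b)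
    {t : ∀ i, B i → ℝ} (ht : isRandPolicy B t) {m : Fin n → ℝ}
    (hm : isInvProb (randMatrix B P t) m) (hval : ∑ i, m i * randPayment B r t i = lam)
    {i : Fin n} {b : B i} (hi : 0 < m i) (hb : 0 < t i b) : slack r P u lam i b = 0 := by
  have hsum := sum_mul_randPayment_add_sum_mul_slack (r := r) (u := u) (lam := lam) ht hm
  rw [hval, add_eq_left] at hsum
  have hrow := (sum_eq_zero_iff_of_nonneg fun i _ => mul_nonneg (hm.1 i)
    (sum_nonneg fun b _ => mul_nonneg (ht.1 i b) (hu i b))).1 hsum i (mem_univ i)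
  have hterm := (sum_eq_zero_iff_of_nonneg fun b _ => mul_nonneg (ht.1 i b) (hu i b)).1
    ((mul_eq_zero.1 hrow).resolve_left hi.ne') b (mem_univ b)
  exact (mul_eq_zero.1 hterm).resolve_left hb.ne'

open Classical in
noncomputable def detPolicy (τ : ∀ i, B i) : ∀ i, B i → ℝ := fun i b => if b = τ i then 1 else 0

lemma isRandPolicy_detPolicy (τ : ∀ i, B i) : isRandPolicy B (detPolicy τ) :=
  ⟨fun i b => by unfold detPolicy; split_ifs <;> norm_num, fun i => by classical simp [detPolicy]⟩

@[simp]
lemma randMatrix_detPolicy (τ : ∀ i, B i) :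
    randMatrix B P (detPolicy τ) = fun i j => P i (τ i) j := by
  classical
  ext i j
  simp [randMatrix, detPolicy]

@[simp]
lemma randPayment_detPolicy (τ : ∀ i, B i) :
    randPayment B r (detPolicy τ) = fun i => r i (τ i) := by
  classical
  ext i
  simp [randPayment, detPolicy]

lemma sum_mul_payment_add_sum_mul_slack {τ : ∀ i, B i} {m : Fin n → ℝ}
    (hm : isInvProb (fun i j => P i (τ i) j) m) :
    ∑ i, m i * r i (τ i) + ∑ i, m i * slack r P u lam i (τ i) = lam := by
  classical
  simpa [detPolicy] using sum_mul_randPayment_add_sum_mul_slack (r := r) (u := u) (lam := lam)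
    (isRandPolicy_detPolicy τ) (m := m) (by rwa [randMatrix_detPolicy])

lemma sum_mul_payment_le (hu : ∀ i b, 0 ≤ slack r P u lam i b) {τ : ∀ i, B i}
    {m : Fin n → ℝ} (hm : isInvProb (fun i j => P i (τ i) j) m) :
    ∑ i, m i * r i (τ i) ≤ lam := by
  linarith [sum_mul_payment_add_sum_mul_slack (r := r) (u := u) (lam := lam) hm,
    sum_nonneg fun i (_ : i ∈ univ) => mul_nonneg (hm.1 i) (hu i (τ i))]

lemma sum_mul_payment_eq {τ : ∀ i, B i} {m : Fin n → ℝ}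
    (hm : isInvProb (fun i j => P i (τ i) j) m)
    (hslack : ∀ i, 0 < m i → slack r P u lam i (τ i) = 0) :
    ∑ i, m i * r i (τ i) = lam := by
  have hzero : ∑ i, m i * slack r P u lam i (τ i) = 0 := sum_eq_zero fun i _ => by
    rcases (hm.1 i).eq_or_lt with h | h
    · simp [← h]
    · simp [hslack i h]
  linarith [sum_mul_payment_add_sum_mul_slack (r := r) (u := u) (lam := lam) hm]

end Shapley

section UniqueMaximizer

variable {n : ℕ} {B : Fin n → Type} [∀ i, Fintype (B i)]
  {r : ∀ i, B i → ℝ} {P : ∀ i, B i → Fin n → ℝ} {u : Fin n → ℝ} {lam : ℝ}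

lemma isRandPolicy.exists_pos {t : ∀ i, B i → ℝ} (ht : isRandPolicy B t) :
    ∃ σ : ∀ i, B i, ∀ i, 0 < t i (σ i) := by
  choose σ hσ using fun i => exists_lt_of_sum_lt (s := univ) (f := 0) (g := t i)
    (by simp [ht.2 i])
  exact ⟨σ, fun i => (hσ i).2⟩

lemma isInvProb_randMatrix_of_forall_pos {t : ∀ i, B i → ℝ} (ht : isRandPolicy B t)
    {μ : Fin n → ℝ}
    (hinv : ∀ τ : ∀ i, B i, (∀ i, 0 < t i (τ i)) → isInvProb (fun i j => P i (τ i) j) μ) :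
    isInvProb (randMatrix B P t) μ := by
  obtain ⟨σ, hσ⟩ := ht.exists_pos
  have hσinv := hinv σ hσ
  have hrow : ∀ i b j, 0 < t i b → μ i * P i b j = μ i * P i (σ i) j := fun i b j hb =>
    mul_eq_mul_of_isInvProb_update hσinv (hinv _ fun k => by
      rcases eq_or_ne k i with rfl | hk
      · simpa using hb
      · simpa [hk] using hσ k) j
  refine ⟨hσinv.1, hσinv.2.1, fun j => ?_⟩
  calc ∑ i, μ i * randMatrix B P t i j = ∑ i, ∑ b, t i b * (μ i * P i b j) := by
        simp only [randMatrix, mul_sum]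
        exact sum_congr rfl fun i _ => sum_congr rfl fun b _ => by ring
    _ = ∑ i, ∑ b, t i b * (μ i * P i (σ i) j) := by
        refine sum_congr rfl fun i _ => sum_congr rfl fun b _ => ?_
        rcases (ht.1 i b).eq_or_lt with h | h
        · simp [← h]
        · rw [hrow i b j h]
    _ = ∑ i, μ i * P i (σ i) j := by simp only [← sum_mul, ht.2, one_mul]
    _ = μ j := hσinv.2.2 j

lemma isInvProb_and_support_subset_of_pos (hP : ∀ i b, P i b ∈ stdSimplex ℝ (Fin n))
    (hu : ∀ i b, 0 ≤ slack r P u lam i b) {mstar : Fin n → ℝ}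
    (huniq : ∀ m (τ : ∀ i, B i), isInvProb (fun i j => P i (τ i) j) m →
      ∑ i, m i * r i (τ i) = lam → m = mstar)
    {t : ∀ i, B i → ℝ} (ht : isRandPolicy B t) {m : Fin n → ℝ}
    (hm : isInvProb (randMatrix B P t) m) (hval : ∑ i, m i * randPayment B r t i = lam)
    {τ : ∀ i, B i} (hτ : ∀ i, 0 < m i → 0 < t i (τ i)) :
    isInvProb (fun i j => P i (τ i) j) mstar ∧ ∀ i, 0 < mstar i → 0 < m i := by
  have hQ : ∀ i j, 0 ≤ randMatrix B P t i j := fun i j =>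
    sum_nonneg fun b _ => mul_nonneg (ht.1 i b) ((hP i b).1 j)
  have hclosed : ∀ i ∈ {k | 0 < m k}, ∀ j, 0 < P i (τ i) j → j ∈ {k | 0 < m k} :=
    fun i hi j hj => hm.pos_of_pos hQ hi <| (mul_pos (hτ i hi) hj).trans_le <|
      single_le_sum (f := fun b => t i b * P i b j)
        (fun b _ => mul_nonneg (ht.1 i b) ((hP i b).1 j)) (mem_univ (τ i))
  obtain ⟨i₀, hi₀⟩ := hm.exists_pos
  obtain ⟨m', hm', hsupp⟩ := exists_isInvProb_subset (fun i => hP i (τ i)) hi₀ hclosed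
  obtain rfl := huniq m' τ hm' <| sum_mul_payment_eq hm' fun i hi =>
    slack_eq_zero_of_sum_mul_randPayment_eq hu ht hm hval (hsupp i hi) (hτ i (hsupp i hi))
  exact ⟨hm', hsupp⟩

lemma eq_of_isMaximizing (hP : ∀ i b, P i b ∈ stdSimplex ℝ (Fin n))
    (hu : ∀ i b, 0 ≤ slack r P u lam i b) {mstar : Fin n → ℝ}
    (huniq : ∀ m (τ : ∀ i, B i), isInvProb (fun i j => P i (τ i) j) m →
      ∑ i, m i * r i (τ i) = lam → m = mstar)
    {m : Fin n → ℝ} (hmax : isMaximizing B r P lam m) : m = mstar := by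
  obtain ⟨t, ht, hval, hext⟩ := hmax
  have key := fun (τ : ∀ i, B i) (hτ : ∀ i, 0 < t i (τ i)) =>
    isInvProb_and_support_subset_of_pos hP hu huniq ht hext.1 hval fun i _ => hτ i
  obtain ⟨σ, hσ⟩ := ht.exists_pos
  exact (eq_of_mem_extremePoints_invProbSet hext
    (isInvProb_randMatrix_of_forall_pos ht fun τ hτ => (key τ hτ).1) (key σ hσ).2).symm

lemma isMaximizing_of_forall_eq (hu : ∀ i b, 0 ≤ slack r P u lam i b) {τ : ∀ i, B i}
    {mstar : Fin n → ℝ} (hτ : isInvProb (fun i j => P i (τ i) j) mstar)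
    (hval : ∑ i, mstar i * r i (τ i) = lam)
    (huniq : ∀ m, isInvProb (fun i j => P i (τ i) j) m → ∑ i, m i * r i (τ i) = lam →
      m = mstar) :
    isMaximizing B r P lam mstar := by
  refine ⟨detPolicy τ, isRandPolicy_detPolicy τ, by simpa using hval, ?_⟩
  rw [randMatrix_detPolicy]
  let f : (Fin n → ℝ) →ₗ[ℝ] ℝ := ∑ i, r i (τ i) • LinearMap.proj i
  have hf : ∀ y, f y = ∑ i, y i * r i (τ i) := fun y => by simp [f, mul_comm]
  refine mem_extremePoints_of_forall_le f hτ (fun y hy => ?_) fun y hy hy' => huniq y hy ?_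
  · rw [hf, hf, hval]
    exact sum_mul_payment_le hu hy
  · rwa [hf, hf, hval] at hy'

end UniqueMaximizer

theorem stmt6_general {n : ℕ}
    (B : Fin n → Type) [∀ i, Fintype (B i)] [∀ i, Nonempty (B i)]
    (r : ∀ i, B i → ℝ) (P : ∀ i, B i → Fin n → ℝ)
    (hP : ∀ i b, (∀ j, 0 ≤ P i b j) ∧ ∑ j, P i b j = 1)
    (T : (Fin n → ℝ) → (Fin n → ℝ)) (hT : T = onePlayerOp B r P)
    (u : Fin n → ℝ) (lam : ℝ) (h : T u = (fun _ => lam) + u)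
    (mstar : Fin n → ℝ)
    (hmstar : (∀ i, 0 ≤ mstar i) ∧ (∑ i, mstar i) = 1 ∧
      ∃ τ : ∀ i, B i, isInvProb (fun i j => P i (τ i) j) mstar ∧
        (∑ i, mstar i * r i (τ i)) = lam)
    (huniq : ∀ m : Fin n → ℝ, ((∀ i, 0 ≤ m i) ∧ (∑ i, m i) = 1 ∧
      ∃ τ : ∀ i, B i, isInvProb (fun i j => P i (τ i) j) m ∧
        (∑ i, m i * r i (τ i)) = lam) → m = mstar) :
    {I : Set (Fin n) | isCriticalClass B r P lam I} = {{i | 0 < mstar i}} := by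
  subst hT
  have hu := slack_nonneg_of_onePlayerOp_eq r P u lam h
  have huniq' : ∀ m (τ : ∀ i, B i), isInvProb (fun i j => P i (τ i) j) m →
      ∑ i, m i * r i (τ i) = lam → m = mstar :=
    fun m τ hm hval => huniq m ⟨hm.1, hm.2.1, τ, hm, hval⟩
  obtain ⟨-, -, τ, hτ, hval⟩ := hmstar
  have hmax := isMaximizing_of_forall_eq hu hτ hval fun m hm => huniq' m τ hm
  have heq : ∀ m, isMaximizing B r P lam m → m = mstar := fun m => eq_of_isMaximizing hP hu huniq'
  ext I
  simp only [Set.mem_ofPred_eq, Set.mem_singleton_iff, isCriticalClass]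
  constructor
  · rintro ⟨⟨m, hm, rfl⟩, -⟩
    rw [heq m hm]
  · rintro rfl
    exact ⟨⟨mstar, hmax, rfl⟩, fun m hm _ => by rw [heq m hm]⟩

/-- if there is a unique probability vector `m*` with `⟨m*, r^τ⟩ = λ` and
`m* ∈ M(P^τ)` for some deterministic policy `τ`, then `T` has a unique critical class,
namely the support of `m*`. -/
theorem stmt6 {n : ℕ} (hn : 0 < n)
    (B : Fin n → Type) [∀ i, Fintype (B i)] [∀ i, Nonempty (B i)]
    (r : ∀ i, B i → ℝ) (P : ∀ i, B i → Fin n → ℝ)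
    (hP : ∀ i b, (∀ j, 0 ≤ P i b j) ∧ ∑ j, P i b j = 1)
    (T : (Fin n → ℝ) → (Fin n → ℝ)) (hT : T = onePlayerOp B r P)
    (u : Fin n → ℝ) (lam : ℝ) (h : T u = (fun _ => lam) + u)
    (mstar : Fin n → ℝ)
    (hmstar : (∀ i, 0 ≤ mstar i) ∧ (∑ i, mstar i) = 1 ∧
      ∃ τ : ∀ i, B i, isInvProb (fun i j => P i (τ i) j) mstar ∧
        (∑ i, mstar i * r i (τ i)) = lam)
    (huniq : ∀ m : Fin n → ℝ, ((∀ i, 0 ≤ m i) ∧ (∑ i, m i) = 1 ∧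
      ∃ τ : ∀ i, B i, isInvProb (fun i j => P i (τ i) j) m ∧
        (∑ i, m i * r i (τ i)) = lam) → m = mstar) :
    {I : Set (Fin n) | isCriticalClass B r P lam I} = {{i | 0 < mstar i}} :=
  stmt6_general B r P hP T hT u lam h mstar hmstar huniq
end

section
/- Let T : ℝⁿ → ℝⁿ be a perfect-information finite Shapley operator and let M ≥ 0. Then the operator T ∘ R_M has an eigenvalue: there exist λ ∈ ℝ and u ∈ ℝⁿ with T(R_M(u)) = λe + u. -/
/-- The map `R_M`, `(R_M x)_i = max( x_i, max_j (−M + x_j) )`. -/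
noncomputable def RM {n : ℕ} (M : ℝ) (x : Fin n → ℝ) : Fin n → ℝ :=
  fun i => max (x i) (⨆ j, (-M + x j))

open Function Filter Topology

section AddHomogeneous

variable {ι : Type*}

def IsAddHomogeneous (F : (ι → ℝ) → ι → ℝ) : Prop :=
  ∀ x (c : ℝ), F (x + const ι c) = F x + const ι c

namespace IsAddHomogeneous

variable {F G : (ι → ℝ) → ι → ℝ}

lemma comp (hF : IsAddHomogeneous F) (hG : IsAddHomogeneous G) : IsAddHomogeneous (F ∘ G) :=
  fun x c => by simp only [comp_apply, hG x c, hF (G x) c]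

lemma map_le_add_const (hF : IsAddHomogeneous F) (hmono : Monotone F) {x y : ι → ℝ} {c : ℝ}
    (h : x ≤ y + const ι c) : F x ≤ F y + const ι c :=
  (hmono h).trans_eq (hF y c)

lemma apply_sub_apply_le (hF : IsAddHomogeneous F) (hmono : Monotone F) {x : ι → ℝ} {D : ℝ}
    (hx : ∀ k l, x k - x l ≤ D) (i j : ι) : F x i - F x j ≤ F 0 i - F 0 j + 2 * D := by
  have hupper := hF.map_le_add_const hmono (x := x) (y := 0) (c := x j + D)
    (fun k => by simp only [Pi.add_apply, Pi.zero_apply, const_apply]; linarith [hx k j]) i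
  have hlower := hF.map_le_add_const hmono (x := 0) (y := x) (c := D - x j)
    (fun k => by simp only [Pi.add_apply, Pi.zero_apply, const_apply]; linarith [hx j k]) j
  simp only [Pi.add_apply, const_apply] at hupper hlower
  linarith

variable [Fintype ι]

lemma lipschitzWith_one (hF : IsAddHomogeneous F) (hmono : Monotone F) : LipschitzWith 1 F := by
  have hle : ∀ x y : ι → ℝ, x ≤ y + const ι (dist x y) := fun x y k => by
    have hk := dist_le_pi_dist x y k
    rw [Real.dist_eq] at hk
    simp only [Pi.add_apply, const_apply]
    linarith [le_abs_self (x k - y k)]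
  refine LipschitzWith.of_dist_le_mul fun x y => ?_
  rw [NNReal.coe_one, one_mul, dist_pi_le_iff dist_nonneg]
  intro i
  have hxy := hF.map_le_add_const hmono (hle x y) i
  have hyx := hF.map_le_add_const hmono (hle y x) i
  rw [dist_comm y x] at hyx
  simp only [Pi.add_apply, const_apply] at hxy hyx
  rw [Real.dist_eq, abs_sub_le_iff]
  constructor <;> linarith

lemma exists_normalized_eigen_approx (hF : IsAddHomogeneous F) (hmono : Monotone F) {K : ℝ}
    (hK : ∀ x i j, F x i - F x j ≤ K) (i₀ : ι) {s : ℝ} (hs : 1 < s) :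
    ∃ v : ι → ℝ, ‖v‖ ≤ K ∧ F v = s • v + const ι (F v i₀) := by
  have ht₀ : 0 < s⁻¹ := inv_pos.2 (by linarith)
  have ht₁ : s⁻¹ < 1 := inv_lt_one_of_one_lt₀ hs
  have hcontr : ContractingWith (‖s⁻¹‖₊ * 1) (fun x => s⁻¹ • F x) := by
    refine ⟨?_, (lipschitzWith_smul s⁻¹).comp (hF.lipschitzWith_one hmono)⟩
    rw [mul_one, ← NNReal.coe_lt_coe, coe_nnnorm, Real.norm_eq_abs, abs_of_pos ht₀]
    exact ht₁
  set x := ContractingWith.fixedPoint _ hcontr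
  have hfix : s⁻¹ • F x = x := hcontr.fixedPoint_isFixedPt
  have hx : F x = s • x := calc
    F x = s • s⁻¹ • F x := by rw [smul_smul, mul_inv_cancel₀ (by linarith), one_smul]
    _ = s • x := by rw [hfix]
  set v := x + const ι (-x i₀)
  have hv₀ : v i₀ = 0 := by simp [v]
  have hFv : F v = s • v + const ι ((s - 1) * x i₀) := by
    ext k
    simp only [v, hF x, hx, Pi.add_apply, Pi.smul_apply, const_apply, smul_eq_mul]
    ring
  refine ⟨v, ?_, ?_⟩
  · have hK₀ : 0 ≤ K := by simpa using hK x i₀ i₀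
    have hvk : ∀ k, v k = s⁻¹ * (F x k - F x i₀) := fun k => by
      simp only [v, hx, Pi.add_apply, Pi.smul_apply, const_apply, smul_eq_mul]
      field_simp
      ring
    refine pi_norm_le_iff_of_nonneg hK₀ |>.2 fun k => ?_
    rw [Real.norm_eq_abs, hvk, abs_mul, abs_of_pos ht₀]
    exact (mul_le_of_le_one_left (abs_nonneg _) ht₁.le).trans
      (abs_sub_le_iff.2 ⟨hK x k i₀, hK x i₀ k⟩)
  · have hc : F v i₀ = (s - 1) * x i₀ := by
      simp [hFv, hv₀]
    rw [hc, hFv]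

theorem exists_eigenvector_of_oscillation_le (hF : IsAddHomogeneous F) (hmono : Monotone F)
    {K : ℝ} (hK : ∀ x i j, F x i - F x j ≤ K) :
    ∃ (lam : ℝ) (u : ι → ℝ), F u = const ι lam + u := by
  rcases isEmpty_or_nonempty ι with _ | ⟨⟨i₀⟩⟩
  · exact ⟨0, 0, Subsingleton.elim _ _⟩
  obtain ⟨s, hs₁, hs⟩ : ∃ s : ℕ → ℝ, (∀ k, 1 < s k) ∧ Tendsto s atTop (𝓝 1) :=
    ⟨fun k => 1 + 1 / ((k : ℝ) + 1), fun k => lt_add_of_pos_right 1 Nat.one_div_pos_of_nat,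
      by simpa using tendsto_one_div_add_atTop_nhds_zero_nat.const_add (1 : ℝ)⟩
  choose v hvK hv using fun k => hF.exists_normalized_eigen_approx hmono hK i₀ (hs₁ k)
  obtain ⟨u, -, φ, hφ, hvu⟩ := (isCompact_closedBall (0 : ι → ℝ) K).tendsto_subseq
    (x := v) fun k => mem_closedBall_zero_iff.2 (hvK k)
  have hFc : Continuous F := (hF.lipschitzWith_one hmono).continuous
  have hconst : Continuous fun y => const ι (F y i₀) := by fun_prop
  have hlim := ((hs.comp hφ.tendsto_atTop).smul hvu).add ((hconst.tendsto u).comp hvu)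
  rw [one_smul] at hlim
  refine ⟨F u i₀, u, tendsto_nhds_unique ((hFc.tendsto u).comp hvu) ?_⟩
  rw [add_comm]
  convert hlim using 1
  funext k
  exact hv (φ k)

theorem exists_eigenvector_comp_of_oscillation_le (hF : IsAddHomogeneous F) (hFmono : Monotone F)
    (hG : IsAddHomogeneous G) (hGmono : Monotone G) {D : ℝ}
    (hD : ∀ x i j, G x i - G x j ≤ D) :
    ∃ (lam : ℝ) (u : ι → ℝ), F (G u) = const ι lam + u := by
  have hF₀ : ∀ i j, F 0 i - F 0 j ≤ 2 * ‖F 0‖ := fun i j => by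
    have hi := norm_le_pi_norm (F 0) i
    have hj := norm_le_pi_norm (F 0) j
    rw [Real.norm_eq_abs] at hi hj
    linarith [le_abs_self (F 0 i), neg_abs_le (F 0 j)]
  refine (hF.comp hG).exists_eigenvector_of_oscillation_le (hFmono.comp hGmono)
    (K := 2 * ‖F 0‖ + 2 * D) fun x i j => ?_
  have := hF.apply_sub_apply_le hFmono (hD x) i j
  simp only [comp_apply]
  linarith [hF₀ i j]

end IsAddHomogeneous

end AddHomogeneous

section ShapleyOperator

variable {n : ℕ}

lemma sum_mul_add_const {P : Fin n → ℝ} (hP : ∑ j, P j = 1) (x : Fin n → ℝ) (c : ℝ) :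
    ∑ j, P j * (x j + c) = ∑ j, P j * x j + c := by
  simp only [mul_add, Finset.sum_add_distrib, ← Finset.sum_mul, hP, one_mul]

variable (A : Fin n → Type) [∀ i, Fintype (A i)] [∀ i, Nonempty (A i)]
    (B : ∀ i, A i → Type) [∀ i a, Fintype (B i a)] [∀ i a, Nonempty (B i a)]
    (r : ∀ i, ∀ a : A i, B i a → ℝ) {P : ∀ i, ∀ a : A i, B i a → Fin n → ℝ}

lemma shapleyOp_monotone (hP : ∀ i a b j, 0 ≤ P i a b j) : Monotone (shapleyOp A B r P) :=
  fun _ _ hxy i => ciInf_mono (Finite.bddBelow_range _) fun a =>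
    ciSup_mono (Finite.bddAbove_range _) fun b => add_le_add_right
      (Finset.sum_le_sum fun j _ => mul_le_mul_of_nonneg_left (hxy j) (hP i a b j)) _

lemma isAddHomogeneous_shapleyOp (hP : ∀ i a b, ∑ j, P i a b j = 1) :
    IsAddHomogeneous (shapleyOp A B r P) := fun x c => by
  ext i
  simp only [shapleyOp, Pi.add_apply, const_apply, sum_mul_add_const (hP _ _ _), ← add_assoc]
  simp only [← ciSup_add (Finite.bddAbove_range _), ← ciInf_add (Finite.bddBelow_range _)]

end ShapleyOperator

section RM

variable {n : ℕ} (M : ℝ)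

lemma RM_monotone : Monotone (RM (n := n) M) :=
  fun _ _ hxy i => max_le_max (hxy i)
    (ciSup_mono (Finite.bddAbove_range _) fun j => add_le_add_right (hxy j) _)

lemma isAddHomogeneous_RM : IsAddHomogeneous (RM (n := n) M) := fun x c => by
  ext i
  have : Nonempty (Fin n) := ⟨i⟩
  simp only [RM, Pi.add_apply, const_apply, ← add_assoc,
    ← ciSup_add (Finite.bddAbove_range _), max_add_add_right]

lemma RM_sub_le (x : Fin n → ℝ) (i j : Fin n) : RM M x i - RM M x j ≤ |M| := by
  have hsup : ⨆ k, (-M + x k) ≤ RM M x j := le_max_right _ _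
  have hxi : -M + x i ≤ ⨆ k, (-M + x k) :=
    le_ciSup (f := fun k => -M + x k) (Finite.bddAbove_range _) i
  rw [sub_le_iff_le_add']
  exact max_le (by linarith [le_abs_self M]) (by linarith [abs_nonneg M])

end RM

theorem stmt9_general {n : ℕ}
    (A : Fin n → Type) [∀ i, Fintype (A i)] [∀ i, Nonempty (A i)]
    (B : ∀ i, A i → Type) [∀ i a, Fintype (B i a)] [∀ i a, Nonempty (B i a)]
    (r : ∀ i, ∀ a : A i, B i a → ℝ) (P : ∀ i, ∀ a : A i, B i a → Fin n → ℝ)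
    (hP : ∀ i a b, (∀ j, 0 ≤ P i a b j) ∧ ∑ j, P i a b j = 1)
    (T : (Fin n → ℝ) → (Fin n → ℝ)) (hT : T = shapleyOp A B r P)
    (M : ℝ) :
    ∃ (lam : ℝ) (u : Fin n → ℝ), T (RM M u) = (fun _ => lam) + u := by
  subst hT
  have hT : IsAddHomogeneous (shapleyOp A B r P) :=
    isAddHomogeneous_shapleyOp A B r fun i a b => (hP i a b).2
  exact hT.exists_eigenvector_comp_of_oscillation_le
    (shapleyOp_monotone A B r fun i a b => (hP i a b).1)
    (isAddHomogeneous_RM M) (RM_monotone M) (RM_sub_le M)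

/-- for any perfect-information finite Shapley operator `T` and `M ≥ 0`,
the operator `T ∘ R_M` has an eigenvalue. -/
theorem stmt9 {n : ℕ} (hn : 0 < n)
    (A : Fin n → Type) [∀ i, Fintype (A i)] [∀ i, Nonempty (A i)]
    (B : ∀ i, A i → Type) [∀ i a, Fintype (B i a)] [∀ i a, Nonempty (B i a)]
    (r : ∀ i, ∀ a : A i, B i a → ℝ) (P : ∀ i, ∀ a : A i, B i a → Fin n → ℝ)
    (hP : ∀ i a b, (∀ j, 0 ≤ P i a b j) ∧ ∑ j, P i a b j = 1)
    (T : (Fin n → ℝ) → (Fin n → ℝ)) (hT : T = shapleyOp A B r P)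
    (M : ℝ) (hM : 0 ≤ M) :
    ∃ (lam : ℝ) (u : Fin n → ℝ), T (RM M u) = (fun _ => lam) + u :=
  stmt9_general A B r P hP T hT M
end
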